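/- Let N be a natural number and let λ, λ' be locations in Δ_N. Then λ, λ' are collinear (i.e., they agree in some coordinate) if and only if there exists a unique geodesic path in Δ_N from λ to λ'. Moreover, if λ, λ' are η-collinear for η ∈ {1,2,3}, then every location on this unique geodesic path has the same η-coordinate as λ. -/

import Mathlib

/-- `Δ_N`: the set of triples of natural numbers with sum `N`. -/
def BA.Delta (N : ℕ) : Set (Fin 3 → ℕ) := {v | v 0 + v 1 + v 2 = N}

/-- Adjacency: `u - v = e_i - e_j` (computed in `ℤ³`) for some `i ≠ j`. -/
def BA.Adj (u v : Fin 3 → ℕ) : Prop :=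
  ∃ i j : Fin 3, i ≠ j ∧ ∀ k, (u k : ℤ) - (v k : ℤ) =
    (if k = i then 1 else 0) - (if k = j then 1 else 0)

/-- A walk of length `n` in `Δ_N` from `u` to `v`. -/
def BA.IsWalk (N n : ℕ) (f : ℕ → Fin 3 → ℕ) (u v : Fin 3 → ℕ) : Prop :=
  f 0 = u ∧ f n = v ∧ (∀ i ≤ n, f i ∈ BA.Delta N) ∧ ∀ i < n, BA.Adj (f i) (f (i + 1))

/-- The graph distance on `Δ_N`: the least length of a walk from `u` to `v`. -/
noncomputable def BA.dist (N : ℕ) (u v : Fin 3 → ℕ) : ℕ :=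
  sInf {n | ∃ f : ℕ → Fin 3 → ℕ, BA.IsWalk N n f u v}

/-- The set of geodesic paths in `Δ_N` from `u` to `v`: sequences of length
`∂(u,v)` with consecutive entries adjacent, no immediate backtracking,
all entries in `Δ_N`, starting at `u` and ending at `v`. -/
def BA.geodesics (N : ℕ) (u v : Fin 3 → ℕ) :
    Set (Fin (BA.dist N u v + 1) → Fin 3 → ℕ) :=
  {f | f 0 = u ∧ f (Fin.last (BA.dist N u v)) = v ∧ (∀ i, f i ∈ BA.Delta N) ∧
    (∀ i : ℕ, ∀ _ : i + 1 ≤ BA.dist N u v,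
      BA.Adj (f ⟨i, by omega⟩) (f ⟨i + 1, by omega⟩)) ∧
    (∀ i : ℕ, ∀ _ : i + 2 ≤ BA.dist N u v, f ⟨i, by omega⟩ ≠ f ⟨i + 2, by omega⟩)}

/-!
On `Δ_N` the graph distance is the excess `∑ₖ (λ'ₖ - λₖ)⁺` (half the `ℓ¹` distance): a move
changes it by at most one, and while `λ ≠ λ'` moving a unit from a coordinate where `λ`
exceeds `λ'` to one where it falls short lowers it by one. So a geodesic is exactly a path
all of whose moves are of this kind. If `λ` and `λ'` agree in coordinate `η`, such moves never
touch `η`, and only one of them is available at each location, since just two coordinates are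
left; so the geodesic is unique. If they agree in no coordinate, two coordinates of `λ' - λ`
have the same sign, which gives two different first moves, each extending to a geodesic.
-/

theorem Fin.clamp_val {m : ℕ} (i : Fin (m + 1)) : Fin.clamp i m = i :=
  Fin.ext (Nat.min_eq_left i.is_le)

namespace BA

-- Truncated subtraction makes each summand the positive part `(v k - u k)⁺`.
def excess (u v : Fin 3 → ℕ) : ℕ := (v 0 - u 0) + (v 1 - u 1) + (v 2 - u 2)

def step (u : Fin 3 → ℕ) (a b : Fin 3) : Fin 3 → ℕ :=
  fun k => if k = a then u k + 1 else if k = b then u k - 1 else u k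

variable {N n i : ℕ} {f g : ℕ → Fin 3 → ℕ} {u v w : Fin 3 → ℕ} {a b a' b' η : Fin 3}

@[simp]
theorem mem_delta : u ∈ Delta N ↔ u 0 + u 1 + u 2 = N := Iff.rfl

theorem adj_iff_exists_step : Adj u w ↔ ∃ a b, a ≠ b ∧ 0 < u b ∧ w = step u a b := by
  constructor
  · rintro ⟨i, j, hij, h⟩
    refine ⟨j, i, hij.symm, by have := h i; simp [hij] at this; omega, funext fun k => ?_⟩
    have := h k
    simp only [step]
    split_ifs at this ⊢ <;> subst_vars <;> omega
  · rintro ⟨a, b, hab, hb, rfl⟩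
    refine ⟨b, a, hab.symm, fun k => ?_⟩
    simp only [step]
    split_ifs <;> subst_vars <;> omega

theorem step_mem_delta (hab : a ≠ b) (hb : 0 < u b) (hu : u ∈ Delta N) :
    step u a b ∈ Delta N := by
  simp only [mem_delta] at hu ⊢
  fin_cases a <;> fin_cases b <;> simp_all [step] <;> omega

theorem step_inj (hab : a ≠ b) (hab' : a' ≠ b') (hb : 0 < u b) :
    step u a b = step u a' b' ↔ a = a' ∧ b = b' := by
  refine ⟨fun h => ?_, fun ⟨ha, hb⟩ => ha ▸ hb ▸ rfl⟩
  obtain rfl : a = a' := by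
    by_contra hne
    have := congrFun h a
    simp only [step, if_neg hne, ↓reduceIte] at this
    split_ifs at this <;> omega
  refine ⟨rfl, ?_⟩
  by_contra hne
  have := congrFun h b
  simp only [step, if_neg hab.symm, if_neg hne, ↓reduceIte] at this
  omega

@[simp]
theorem excess_self (u : Fin 3 → ℕ) : excess u u = 0 := by simp [excess]

theorem excess_triangle (u w v : Fin 3 → ℕ) : excess u v ≤ excess u w + excess w v := by
  unfold excess; omega

theorem eq_of_excess_eq_zero (hu : u ∈ Delta N) (hv : v ∈ Delta N) (h : excess u v = 0) :
    u = v := by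
  simp only [mem_delta, excess] at hu hv h
  funext k
  fin_cases k <;> simp <;> omega

theorem excess_le_excess_step_add_one (u v : Fin 3 → ℕ) (a b : Fin 3) :
    excess u v ≤ excess (step u a b) v + 1 := by
  fin_cases a <;> fin_cases b <;> simp [excess, step] <;> omega

theorem excess_step_add_one_eq_iff (hab : a ≠ b) (hb : 0 < u b) :
    excess (step u a b) v + 1 = excess u v ↔ u a < v a ∧ v b < u b := by
  fin_cases a <;> fin_cases b <;> simp_all [excess, step] <;> omega

theorem exists_lt_of_ne (hu : u ∈ Delta N) (hv : v ∈ Delta N) (h : u ≠ v) : ∃ a, u a < v a := by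
  by_contra! h'
  simp only [mem_delta] at hu hv
  have := h' 0; have := h' 1; have := h' 2
  exact h (funext fun k => by fin_cases k <;> simp <;> omega)

theorem unique_descent (hη : w η = v η) (ha : w a < v a) (hb : v b < w b)
    (ha' : w a' < v a') (hb' : v b' < w b') : a = a' ∧ b = b' := by
  have : a ≠ η := by rintro rfl; omega
  have : b ≠ η := by rintro rfl; omega
  have : a' ≠ η := by rintro rfl; omega
  have : b' ≠ η := by rintro rfl; omega
  have : a ≠ b := by rintro rfl; omega
  have : a ≠ b' := by rintro rfl; omega
  have : a' ≠ b := by rintro rfl; omega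
  omega

theorem exists_two_descents (hu : u ∈ Delta N) (hv : v ∈ Delta N) (h : ∀ η, u η ≠ v η) :
    ∃ a b a' b', (a, b) ≠ (a', b') ∧ u a < v a ∧ v b < u b ∧ u a' < v a' ∧ v b' < u b' := by
  simp only [mem_delta] at hu hv
  rcases (h 0).lt_or_gt with h0 | h0 <;> rcases (h 1).lt_or_gt with h1 | h1 <;>
    rcases (h 2).lt_or_gt with h2 | h2
  · omega
  · exact ⟨0, 2, 1, 2, by decide, h0, h2, h1, h2⟩
  · exact ⟨0, 1, 2, 1, by decide, h0, h1, h2, h1⟩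
  · exact ⟨0, 1, 0, 2, by decide, h0, h1, h0, h2⟩
  · exact ⟨1, 0, 2, 0, by decide, h1, h0, h2, h0⟩
  · exact ⟨1, 0, 1, 2, by decide, h1, h0, h1, h2⟩
  · exact ⟨2, 0, 2, 1, by decide, h2, h0, h2, h1⟩
  · omega

namespace IsWalk

theorem take (hf : IsWalk N n f u v) (hi : i ≤ n) : IsWalk N i f u (f i) :=
  ⟨hf.1, rfl, fun k hk => hf.2.2.1 k (by omega), fun k hk => hf.2.2.2 k (by omega)⟩

theorem drop (hf : IsWalk N n f u v) (hi : i ≤ n) :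
    IsWalk N (n - i) (fun k => f (i + k)) (f i) v :=
  ⟨rfl, show f (i + (n - i)) = v by rw [Nat.add_sub_cancel' hi]; exact hf.2.1,
    fun k hk => hf.2.2.1 _ (by omega), fun k hk => hf.2.2.2 _ (by omega)⟩

theorem cons (hu : u ∈ Delta N) (h : Adj u w) (hf : IsWalk N n f w v) :
    IsWalk N (n + 1) (Stream'.cons u f) u v := by
  obtain ⟨rfl, hn, hmem, hadj⟩ := hf
  refine ⟨rfl, hn, fun k hk => ?_, fun k hk => ?_⟩
  · cases k with
    | zero => exact hu
    | succ k => exact hmem k (by omega)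
  · cases k with
    | zero => exact h
    | succ k => exact hadj k (by omega)

theorem excess_le (hf : IsWalk N n f u v) : excess u v ≤ n := by
  induction n generalizing f u with
  | zero => obtain ⟨rfl, h, -⟩ := hf; simp [h]
  | succ n ih =>
    have hadj : Adj (f 0) (f 1) := hf.2.2.2 0 n.succ_pos
    obtain ⟨a, b, -, -, h⟩ := adj_iff_exists_step.mp hadj
    have := ih (hf.drop (i := 1) (by omega))
    have := excess_le_excess_step_add_one u v a b
    rw [hf.1, ← h] at *
    omega

theorem excess_apply (hf : IsWalk N n f u v) (hn : n = excess u v) (hi : i ≤ n) :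
    excess (f i) v = n - i := by
  have := (hf.take hi).excess_le
  have := (hf.drop hi).excess_le
  have := excess_triangle u (f i) v
  omega

theorem exists_descent (hf : IsWalk N n f u v) (hn : n = excess u v) (hi : i < n) :
    ∃ a b, f (i + 1) = step (f i) a b ∧ f i a < v a ∧ v b < f i b := by
  obtain ⟨a, b, hab, hb, h⟩ := adj_iff_exists_step.mp (hf.2.2.2 i hi)
  refine ⟨a, b, h, (excess_step_add_one_eq_iff hab hb).mp ?_⟩
  rw [← h, hf.excess_apply hn hi.le, hf.excess_apply hn hi]
  omega

theorem apply_eq_of_eq (hf : IsWalk N n f u v) (hn : n = excess u v) (hη : u η = v η)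
    (hi : i ≤ n) : f i η = u η := by
  induction i with
  | zero => rw [hf.1]
  | succ i ih =>
    obtain ⟨a, b, h, ha, hb⟩ := hf.exists_descent hn (by omega : i < n)
    have hiη := ih (by omega)
    have haη : η ≠ a := by rintro rfl; omega
    have hbη : η ≠ b := by rintro rfl; omega
    simp only [h, step, if_neg haη, if_neg hbη, hiη]

theorem eq_of_eq (hf : IsWalk N n f u v) (hg : IsWalk N n g u v) (hn : n = excess u v)
    (hη : u η = v η) (hi : i ≤ n) : f i = g i := by
  induction i with
  | zero => rw [hf.1, hg.1]
  | succ i ih =>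
    obtain ⟨a, b, hf', ha, hb⟩ := hf.exists_descent hn (by omega : i < n)
    obtain ⟨a', b', hg', ha', hb'⟩ := hg.exists_descent hn (by omega : i < n)
    rw [← ih (by omega)] at hg' ha' hb'
    have hiη : f i η = v η := (hf.apply_eq_of_eq hn hη (by omega)).trans hη
    obtain ⟨rfl, rfl⟩ := unique_descent hiη ha hb ha' hb'
    rw [hf', hg']

end IsWalk

theorem IsWalk.cons_step (hu : u ∈ Delta N) (ha : u a < v a) (hb : v b < u b)
    (hf : IsWalk N (excess (step u a b) v) f (step u a b) v) :
    IsWalk N (excess u v) (Stream'.cons u f) u v := by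
  have hab : a ≠ b := by rintro rfl; omega
  have hb0 : 0 < u b := by omega
  rw [← (excess_step_add_one_eq_iff hab hb0).mpr ⟨ha, hb⟩]
  exact hf.cons hu (adj_iff_exists_step.mpr ⟨a, b, hab, hb0, rfl⟩)

theorem exists_isWalk (hu : u ∈ Delta N) (hv : v ∈ Delta N) :
    ∃ f, IsWalk N (excess u v) f u v := by
  induction h : excess u v generalizing u with
  | zero =>
    obtain rfl := eq_of_excess_eq_zero hu hv h
    exact ⟨fun _ => u, rfl, rfl, fun _ _ => hu, fun _ h => absurd h (Nat.not_lt_zero _)⟩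
  | succ n ih =>
    have hne : u ≠ v := by rintro rfl; simp at h
    obtain ⟨a, ha⟩ := exists_lt_of_ne hu hv hne
    obtain ⟨b, hb⟩ := exists_lt_of_ne hv hu hne.symm
    have hab : a ≠ b := by rintro rfl; omega
    have hmem := step_mem_delta hab (by omega) hu
    have hn := (excess_step_add_one_eq_iff hab (by omega)).mpr ⟨ha, hb⟩
    obtain ⟨f, hf⟩ := ih hmem (by omega)
    rw [← h]
    exact ⟨_, IsWalk.cons_step hu ha hb (by rwa [show excess (step u a b) v = n by omega])⟩

theorem exists_isWalk_step (hu : u ∈ Delta N) (hv : v ∈ Delta N) (ha : u a < v a)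
    (hb : v b < u b) :
    ∃ f, IsWalk N (excess u v) f u v ∧ f 1 = step u a b := by
  have hmem := step_mem_delta (a := a) (by rintro rfl; omega) (by omega : 0 < u b) hu
  obtain ⟨f, hf⟩ := exists_isWalk hmem hv
  exact ⟨_, hf.cons_step hu ha hb, hf.1⟩

theorem dist_eq_excess (hu : u ∈ Delta N) (hv : v ∈ Delta N) : dist N u v = excess u v := by
  obtain ⟨f, hf⟩ := exists_isWalk hu hv
  exact le_antisymm (Nat.sInf_le ⟨f, hf⟩) (le_csInf ⟨_, f, hf⟩ fun n ⟨g, hg⟩ => hg.excess_le)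

theorem IsWalk.mem_geodesics (hu : u ∈ Delta N) (hv : v ∈ Delta N)
    (hf : IsWalk N (dist N u v) f u v) :
    (fun i : Fin (dist N u v + 1) => f i) ∈ geodesics N u v := by
  have hd := dist_eq_excess hu hv
  refine ⟨by simpa using hf.1, hf.2.1, fun i => hf.2.2.1 i (by omega),
    fun i hi => hf.2.2.2 i hi, fun i hi h => ?_⟩
  have h1 := hf.excess_apply hd (i := i) (by omega)
  have h2 := hf.excess_apply hd hi
  rw [show f i = f (i + 2) from h] at h1
  omega

theorem isWalk_of_mem_geodesics {γ : Fin (dist N u v + 1) → Fin 3 → ℕ}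
    (hγ : γ ∈ geodesics N u v) : IsWalk N (dist N u v) (fun i => γ (Fin.clamp i _)) u v := by
  obtain ⟨h0, hlast, hmem, hadj, -⟩ := hγ
  refine ⟨by simpa [Fin.clamp] using h0, by simpa [Fin.clamp, Fin.last] using hlast,
    fun i _ => hmem _, fun i hi => ?_⟩
  convert hadj i hi using 2 <;> ext <;> simp <;> omega

theorem apply_eq_of_mem_geodesics (hu : u ∈ Delta N) (hv : v ∈ Delta N) (hη : u η = v η)
    {γ : Fin (dist N u v + 1) → Fin 3 → ℕ} (hγ : γ ∈ geodesics N u v) (i : Fin _) :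
    γ i η = u η := by
  simpa [Fin.clamp_val] using
    (isWalk_of_mem_geodesics hγ).apply_eq_of_eq (dist_eq_excess hu hv) hη i.is_le

theorem geodesics_nonempty (hu : u ∈ Delta N) (hv : v ∈ Delta N) :
    (geodesics N u v).Nonempty := by
  obtain ⟨f, hf⟩ := exists_isWalk hu hv
  exact ⟨_, IsWalk.mem_geodesics hu hv (dist_eq_excess hu hv ▸ hf)⟩

theorem geodesics_subsingleton (hu : u ∈ Delta N) (hv : v ∈ Delta N) (hη : u η = v η) :
    (geodesics N u v).Subsingleton := fun γ hγ δ hδ => funext fun i => by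
  simpa [Fin.clamp_val] using (isWalk_of_mem_geodesics hγ).eq_of_eq (isWalk_of_mem_geodesics hδ)
    (dist_eq_excess hu hv) hη i.is_le

theorem geodesics_nontrivial (hu : u ∈ Delta N) (hv : v ∈ Delta N) (h : ∀ η, u η ≠ v η) :
    (geodesics N u v).Nontrivial := by
  obtain ⟨a, b, a', b', hne, ha, hb, ha', hb'⟩ := exists_two_descents hu hv h
  have hd := dist_eq_excess hu hv
  obtain ⟨f, hf, hf1⟩ := exists_isWalk_step hu hv ha hb
  obtain ⟨g, hg, hg1⟩ := exists_isWalk_step hu hv ha' hb'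
  rw [← hd] at hf hg
  refine ⟨_, hf.mem_geodesics hu hv, _, hg.mem_geodesics hu hv, fun hfg => hne ?_⟩
  have hpos : 1 ≤ dist N u v := by
    rw [hd]; by_contra! h0; exact h 0 (congrFun (eq_of_excess_eq_zero hu hv (by omega)) 0)
  have h1 := congrFun hfg ⟨1, by omega⟩
  simp only [hf1, hg1] at h1
  obtain ⟨rfl, rfl⟩ := (step_inj (by rintro rfl; omega) (by rintro rfl; omega) (by omega)).mp h1
  rfl

end BA

/-- Locations `λ, λ'` of `Δ_N` are collinear (agree in some coordinate) iff
there is a unique geodesic path in `Δ_N` from `λ` to `λ'`; moreover if they are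
`η`-collinear then every location on a geodesic path from `λ` to `λ'` has the
same `η`-coordinate as `λ`. -/
theorem stmt4 (N : ℕ) (l l' : Fin 3 → ℕ)
    (hl : l ∈ BA.Delta N) (hl' : l' ∈ BA.Delta N) :
    ((∃ η : Fin 3, l η = l' η) ↔ ∃! f, f ∈ BA.geodesics N l l') ∧
      (∀ η : Fin 3, l η = l' η →
        ∀ f ∈ BA.geodesics N l l', ∀ i, f i η = l η) := by
  refine ⟨⟨fun ⟨η, hη⟩ => ?_, fun h => ?_⟩,
    fun η hη f hf => BA.apply_eq_of_mem_geodesics hl hl' hη hf⟩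
  · obtain ⟨f, hf⟩ := BA.geodesics_nonempty hl hl'
    exact ⟨f, hf, fun g hg => BA.geodesics_subsingleton hl hl' hη hg hf⟩
  · by_contra! hcol
    obtain ⟨f, hf, g, hg, hfg⟩ := BA.geodesics_nontrivial hl hl' hcol
    exact hfg (h.unique hf hg)
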